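/- Let f : ℝ^{d×N} → [0,+∞] and, for each n ∈ ℕ with n ≥ 1, define f_n(ξ) := max{ f(ξ), |ξ|/n }. Then the level convex envelope of f equals the pointwise infimum of the level convex envelopes of f_n: f^{lc}(ξ) = inf_{n≥1} (f_n)^{lc}(ξ) for every ξ ∈ ℝ^{d×N}. -/
import Mathlib


open Filter Topology

variable {X : Type*}

/-- A function into the extended reals is level convex if along segments its value
is at most the maximum of the values at the endpoints. -/
def LevelConvex [AddCommGroup X] [Module ℝ X] (F : X → EReal) : Prop :=
  ∀ x y : X, ∀ t : ℝ, 0 < t → t < 1 →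
    F (t • x + (1 - t) • y) ≤ max (F x) (F y)

/-- The lower semicontinuous envelope `Γ_τ(F)`: the pointwise supremum of all
lower semicontinuous functions below `F`. -/
noncomputable def lscEnv [TopologicalSpace X] (F : X → EReal) : X → EReal :=
  fun x => ⨆ G : {G : X → EReal // LowerSemicontinuous G ∧ G ≤ F}, (G : X → EReal) x

/-- The level convex envelope `F^{lc}`: the pointwise supremum of all level convex
functions below `F`. -/
noncomputable def lcEnv [AddCommGroup X] [Module ℝ X] (F : X → EReal) : X → EReal :=
  fun x => ⨆ G : {G : X → EReal // LevelConvex G ∧ G ≤ F}, (G : X → EReal) x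

/-- The lower semicontinuous level convex envelope `F^{lslc}`: the pointwise supremum
of all functions below `F` which are both lower semicontinuous and level convex. -/
noncomputable def lslcEnv [TopologicalSpace X] [AddCommGroup X] [Module ℝ X]
    (F : X → EReal) : X → EReal :=
  fun x => ⨆ G : {G : X → EReal // LowerSemicontinuous G ∧ LevelConvex G ∧ G ≤ F},
    (G : X → EReal) x

lemma lcEnv_le [AddCommGroup X] [Module ℝ X] (F : X → EReal) : lcEnv F ≤ F :=
  fun x => iSup_le fun G => G.2.2 x

lemma lcEnv_mono [AddCommGroup X] [Module ℝ X] {F F' : X → EReal} (h : F ≤ F') :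
    lcEnv F ≤ lcEnv F' := fun x =>
  iSup_le fun G => le_iSup_of_le (⟨G.1, G.2.1, G.2.2.trans h⟩ :
    {G : X → EReal // LevelConvex G ∧ G ≤ F'}) le_rfl

lemma le_lcEnv [AddCommGroup X] [Module ℝ X] {F G : X → EReal} (hG : LevelConvex G)
    (hGF : G ≤ F) : G ≤ lcEnv F := fun x =>
  le_iSup_of_le (⟨G, hG, hGF⟩ : {G : X → EReal // LevelConvex G ∧ G ≤ F}) le_rfl

lemma levelConvex_lcEnv [AddCommGroup X] [Module ℝ X] (F : X → EReal) :
    LevelConvex (lcEnv F) := by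
  intro x y t ht0 ht1
  refine iSup_le fun G => (G.2.1 x y t ht0 ht1).trans ?_
  exact max_le_max (le_iSup_of_le G le_rfl) (le_iSup_of_le G le_rfl)


/-- for `f : ℝ^{d×N} → [0,+∞]` and `f_n := max{f, |·|/n}`, the level convex
envelope of `f` is the pointwise infimum over `n ≥ 1` of the level convex envelopes of
the `f_n`. -/
theorem stmt16 (d N : ℕ) (f : EuclideanSpace ℝ (Fin d × Fin N) → EReal)
    (hf : ∀ ξ, 0 ≤ f ξ) :
    lcEnv f = fun ξ =>
      ⨅ n : {n : ℕ // 1 ≤ n},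
        lcEnv (fun η => max (f η) (((‖η‖ / (n : ℕ) : ℝ)) : EReal)) ξ := by
  set I := {n : ℕ // 1 ≤ n}
  set fn : I → EuclideanSpace ℝ (Fin d × Fin N) → EReal :=
    fun n η => max (f η) (((‖η‖ / (n : ℕ) : ℝ)) : EReal) with hfn
  have hfle : ∀ n : I, f ≤ fn n := fun n η => le_max_left _ _
  -- antitonicity of fn and of the envelopes
  have hanti : ∀ n m : I, (n : ℕ) ≤ (m : ℕ) → lcEnv (fn m) ≤ lcEnv (fn n) := by
    intro n m hnm
    refine lcEnv_mono fun η => max_le_max le_rfl ?_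
    have h1 : (0:ℝ) < (n : ℕ) := by exact_mod_cast n.2
    have h2 : (0:ℝ) < (m : ℕ) := lt_of_lt_of_le h1 (by exact_mod_cast hnm)
    have : ‖η‖ / (m : ℕ) ≤ ‖η‖ / (n : ℕ) := by
      apply div_le_div_of_nonneg_left (norm_nonneg η) h1
      exact_mod_cast hnm
    exact EReal.coe_le_coe_iff.mpr this
  funext ξ
  refine le_antisymm (le_iInf fun n => lcEnv_mono (hfle n) ξ) ?_
  -- the infimum function
  set H : EuclideanSpace ℝ (Fin d × Fin N) → EReal := fun x => ⨅ n : I, lcEnv (fn n) x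
    with hH
  have hHlc : LevelConvex H := by
    intro x y t ht0 ht1
    have step1 : H (t • x + (1 - t) • y) ≤ ⨅ n : I, max (lcEnv (fn n) x) (lcEnv (fn n) y) :=
      iInf_mono fun n => levelConvex_lcEnv (fn n) x y t ht0 ht1
    refine step1.trans ?_
    have step2 : (⨅ n : I, max (lcEnv (fn n) x) (lcEnv (fn n) y)) ≤
        ⨅ n : I, ⨅ m : I, (lcEnv (fn n) x ⊔ lcEnv (fn m) y) := by
      refine le_iInf fun n => le_iInf fun m => ?_
      set k : I := ⟨max (n : ℕ) (m : ℕ), le_trans n.2 (le_max_left _ _)⟩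
      refine iInf_le_of_le k (sup_le_sup ?_ ?_)
      · exact hanti n k (le_max_left _ _) x
      · exact hanti m k (le_max_right _ _) y
    refine step2.trans ?_
    have : (⨅ n : I, ⨅ m : I, (lcEnv (fn n) x ⊔ lcEnv (fn m) y)) =
        (⨅ n : I, lcEnv (fn n) x) ⊔ (⨅ m : I, lcEnv (fn m) y) := by
      rw [iInf_sup_eq]
      exact iInf_congr fun n => (sup_iInf_eq _ _).symm
    rw [this]
  have hHf : H ≤ f := by
    intro x
    refine le_of_forall_gt_imp_ge_of_dense fun c hc => ?_
    have hc0 : (0 : EReal) < c := lt_of_le_of_lt (hf x) hc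
    rcases eq_or_ne c ⊤ with rfl | hct
    · exact le_top
    · lift c to ℝ using ⟨hct, ne_bot_of_gt hc0⟩
      have hcr : (0:ℝ) < c := by exact_mod_cast hc0
      obtain ⟨n₀, hn₀⟩ := exists_nat_ge (‖x‖ / c)
      set n : I := ⟨max n₀ 1, le_max_right _ _⟩
      have hnpos : (0:ℝ) < ((n : ℕ) : ℝ) := by
        have : (1:ℕ) ≤ (n : ℕ) := n.2
        exact_mod_cast this
      have hdiv : ‖x‖ / ((n : ℕ) : ℝ) ≤ c := by
        rw [div_le_iff₀ hnpos]
        have h1 : ‖x‖ ≤ n₀ * c := by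
          have := (div_le_iff₀ hcr).mp hn₀
          linarith
        have h2 : (n₀ : ℝ) * c ≤ ((n : ℕ) : ℝ) * c := by
          apply mul_le_mul_of_nonneg_right _ hcr.le
          exact_mod_cast le_max_left n₀ 1
        linarith
      calc H x ≤ lcEnv (fn n) x := iInf_le _ n
        _ ≤ fn n x := lcEnv_le (fn n) x
        _ ≤ (c : EReal) := by
            refine max_le hc.le ?_
            exact_mod_cast hdiv
  exact le_lcEnv hHlc hHf ξ
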